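/- arXiv:2102.02469 — 3 statements merged into one kernel-verified Lean document; each statement's English description precedes it below -/
import Mathlib

section
/- For n ∈ ℤ[ω] with n ≡ 1 (mod 3) and coprime to 3, the cubic residue symbol of ω at n satisfies (ω/n)₃ = ω^{(N(n)−1)/3}, where N denotes the norm from ℚ(ω) to ℚ. -/
open Complex

/-- `ω = e^{2πi/3}`, a primitive cube root of unity. -/
noncomputable def ω : ℂ := Complex.exp (2 * Real.pi * Complex.I / 3)

/-- The ring of Eisenstein integers `ℤ[ω]`, as a subalgebra of `ℂ`. -/
noncomputable def Eis : Subalgebra ℤ ℂ := Algebra.adjoin ℤ {ω}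

/-- `ω` as an element of `ℤ[ω]`. -/
noncomputable def ωE : Eis := ⟨ω, Algebra.subset_adjoin (Set.mem_singleton ω)⟩

/-- `IsCubicSymbol χ` says that `χ n a` is the cubic residue symbol `(a/n)₃` on `ℤ[ω]`:
it is multiplicative in the lower argument, and at a prime `π ≡ ±1 (mod 3)` and `a`
coprime to `π` it is the unique cube root of unity congruent to `a^((N(π)-1)/3)` mod `π`
(and it vanishes when `a` is not coprime to `π`). -/
structure IsCubicSymbol (χ : Eis → Eis → ℂ) : Prop where
  map_one_left : ∀ a, χ 1 a = 1
  mul_left : ∀ m n a, χ (m * n) a = χ m a * χ n a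
  cube : ∀ π a, Prime π → ((3 : Eis) ∣ π - 1 ∨ (3 : Eis) ∣ π + 1) → IsCoprime a π →
      (χ π a) ^ 3 = 1
  spec : ∀ π a (e : ℕ), Prime π → ((3 : Eis) ∣ π - 1 ∨ (3 : Eis) ∣ π + 1) → IsCoprime a π →
      Complex.normSq (π : ℂ) = 3 * e + 1 →
      ∃ u : Eis, (u : ℂ) = χ π a ∧ π ∣ a ^ e - u
  eq_zero : ∀ π a, Prime π → ((3 : Eis) ∣ π - 1 ∨ (3 : Eis) ∣ π + 1) → ¬ IsCoprime a π →
      χ π a = 0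

/-!
`ℤ[ω]` is norm-Euclidean, so a non-unit `n ≡ 1 (mod 3)` factors as `n = π m` with `π` a prime
`≡ 1 (mod 3)` (each prime coprime to `3` has such an associate among its six unit multiples)
and `m ≡ 1 (mod 3)`. Since `(3e₁ + 1)(3e₂ + 1) = 3(e₁ + e₂ + 3e₁e₂) + 1`, the exponent
`(N - 1)/3` is additive modulo `3` along such factorizations, so by induction on the norm it
suffices to treat a prime `π`. There `(ω/π)₃` and `ω^e` are cube roots of unity congruent
modulo `π`; two distinct cube roots of unity differ by an element of norm `3`, whereas
`N(π) ≥ 4`, so they coincide.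
-/

lemma Complex.normSq_sub_eq_three_of_pow_three_eq_one {z w : ℂ} (hz : z ^ 3 = 1) (hw : w ^ 3 = 1)
    (hne : z ≠ w) : normSq (z - w) = 3 := by
  have normSq_eq_one {ζ : ℂ} (h : ζ ^ 3 = 1) : normSq ζ = 1 :=
    (pow_eq_one_iff_of_nonneg (normSq_nonneg ζ) three_ne_zero).1 (by rw [← map_pow, h, map_one])
  have hsum : z ^ 2 + z * w + w ^ 2 = 0 :=
    (mul_eq_zero.1 (by linear_combination hz - hw : (z - w) * (z ^ 2 + z * w + w ^ 2) = 0))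
      |>.resolve_left (sub_ne_zero.2 hne)
  have hsq : normSq (z - w) ^ 2 = 3 ^ 2 := by
    rw [← map_pow, show (z - w) ^ 2 = -3 * (z * w) by linear_combination hsum, map_mul, map_mul,
      normSq_eq_one hz, normSq_eq_one hw]
    norm_num [normSq_apply]
  exact (pow_left_inj₀ (normSq_nonneg _) (by norm_num) two_ne_zero).1 hsq

lemma omega_eq_exp_mul_I : ω = exp ((2 * Real.pi / 3 : ℝ) * I) := by
  rw [ω]; push_cast; ring_nf

lemma re_omega : ω.re = -(1 / 2) := by
  rw [omega_eq_exp_mul_I, exp_ofReal_mul_I_re, show 2 * Real.pi / 3 = Real.pi - Real.pi / 3 by ring,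
    Real.cos_pi_sub, Real.cos_pi_div_three]

lemma im_omega : ω.im = √3 / 2 := by
  rw [omega_eq_exp_mul_I, exp_ofReal_mul_I_im, show 2 * Real.pi / 3 = Real.pi - Real.pi / 3 by ring,
    Real.sin_pi_sub, Real.sin_pi_div_three]

lemma omega_pow_three : ω ^ 3 = 1 := by
  rw [ω, ← exp_nat_mul,
    show ((3 : ℕ) : ℂ) * (2 * Real.pi * I / 3) = 2 * Real.pi * I by push_cast; ring,
    exp_two_pi_mul_I]

lemma omega_sq_add_omega_add_one : ω ^ 2 + ω + 1 = 0 := by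
  have hne : ω - 1 ≠ 0 := fun h => by have := re_omega; norm_num [sub_eq_zero.1 h] at this
  exact (mul_eq_zero.1 (by linear_combination omega_pow_three : (ω - 1) * (ω ^ 2 + ω + 1) = 0))
    |>.resolve_left hne

lemma normSq_add_mul_omega (s t : ℝ) : normSq (s + t * ω) = s ^ 2 - s * t + t ^ 2 := by
  have h3 : √3 ^ 2 = 3 := Real.sq_sqrt (by norm_num)
  simp only [normSq_apply, add_re, add_im, mul_re, mul_im, ofReal_re, ofReal_im, re_omega, im_omega]
  linear_combination (t ^ 2 / 4) * h3

lemma omega_pow_eq_mul_of_three_mul_add_one {e e₁ e₂ : ℕ}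
    (h : 3 * e + 1 = (3 * e₁ + 1) * (3 * e₂ + 1)) : ω ^ e = ω ^ e₁ * ω ^ e₂ := by
  obtain rfl : e = e₁ + e₂ + 3 * (e₁ * e₂) := by linarith
  rw [pow_add, pow_add, pow_mul, omega_pow_three, one_pow, mul_one]

namespace Eis

@[simp, norm_cast] lemma coe_three : ((3 : Eis) : ℂ) = 3 :=
  rfl

@[simp, norm_cast] lemma coe_omegaE : ((ωE : Eis) : ℂ) = ω :=
  rfl

noncomputable def mk (a b : ℤ) : Eis := a + b * ωE

@[simp] lemma coe_mk (a b : ℤ) : (mk a b : ℂ) = a + b * ω := by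
  simp [mk]

lemma exists_eq_mk (x : Eis) : ∃ a b : ℤ, x = mk a b := by
  suffices ∃ a b : ℤ, (x : ℂ) = a + b * ω by
    obtain ⟨a, b, h⟩ := this
    exact ⟨a, b, Subtype.ext (by simpa using h)⟩
  refine Algebra.adjoin_induction (p := fun z _ => ∃ a b : ℤ, z = a + b * ω) ?_ ?_ ?_ ?_ x.2
  · rintro z rfl
    exact ⟨0, 1, by simp⟩
  · intro r
    exact ⟨r, 0, by simp⟩
  · rintro z w - - ⟨a, b, rfl⟩ ⟨c, d, rfl⟩
    exact ⟨a + c, b + d, by push_cast; ring⟩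
  · rintro z w - - ⟨a, b, rfl⟩ ⟨c, d, rfl⟩
    exact ⟨a * c - b * d, a * d + b * c - b * d, by
      push_cast; linear_combination (b : ℂ) * d * omega_sq_add_omega_add_one⟩

lemma normSq_mk (a b : ℤ) : normSq (mk a b : ℂ) = ((a ^ 2 - a * b + b ^ 2 : ℤ) : ℝ) := by
  rw [coe_mk, ← ofReal_intCast, ← ofReal_intCast, normSq_add_mul_omega]
  push_cast; ring

protected noncomputable def norm (x : Eis) : ℕ := ⌊normSq (x : ℂ)⌋₊

lemma cast_norm (x : Eis) : (Eis.norm x : ℝ) = normSq (x : ℂ) := by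
  obtain ⟨a, b, rfl⟩ := exists_eq_mk x
  have h : 0 ≤ a ^ 2 - a * b + b ^ 2 := by nlinarith [sq_nonneg (a - b), sq_nonneg a, sq_nonneg b]
  lift a ^ 2 - a * b + b ^ 2 to ℕ using h with k hk
  rw [Eis.norm, normSq_mk, ← hk, Int.cast_natCast, Nat.floor_natCast]

lemma natCast_norm_mk (a b : ℤ) : (Eis.norm (mk a b) : ℤ) = a ^ 2 - a * b + b ^ 2 := by
  exact_mod_cast (cast_norm _).trans (normSq_mk a b)

lemma norm_mul (x y : Eis) : Eis.norm (x * y) = Eis.norm x * Eis.norm y := by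
  have h : (Eis.norm (x * y) : ℝ) = Eis.norm x * Eis.norm y := by
    rw [cast_norm, cast_norm, cast_norm, MulMemClass.coe_mul, map_mul]
  exact_mod_cast h

lemma norm_one : Eis.norm 1 = 1 := by
  have h : (Eis.norm 1 : ℝ) = 1 := by rw [cast_norm]; simp
  exact_mod_cast h

lemma norm_three : Eis.norm 3 = 9 := by
  have h : (Eis.norm 3 : ℝ) = 9 := by rw [cast_norm]; norm_num [normSq_apply]
  exact_mod_cast h

lemma norm_eq_zero_iff {x : Eis} : Eis.norm x = 0 ↔ x = 0 := by
  rw [← Nat.cast_inj (R := ℝ), cast_norm, Nat.cast_zero, normSq_eq_zero, ZeroMemClass.coe_eq_zero]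

lemma norm_pos {x : Eis} (hx : x ≠ 0) : 0 < Eis.norm x :=
  Nat.pos_of_ne_zero (norm_eq_zero_iff.not.2 hx)

lemma isUnit_iff_norm_eq_one {x : Eis} : IsUnit x ↔ Eis.norm x = 1 := by
  refine ⟨fun ⟨u, hu⟩ => ?_, fun h => ?_⟩
  · exact Nat.eq_one_of_mul_eq_one_right (by rw [← norm_mul, ← hu, u.mul_inv, norm_one])
  · obtain ⟨a, b, rfl⟩ := exists_eq_mk x
    have h' : a ^ 2 - a * b + b ^ 2 = 1 := by rw [← natCast_norm_mk, h, Nat.cast_one]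
    refine .of_mul_eq_one (mk (a - b) (-b)) (Subtype.ext ?_)
    have h'' : (a : ℂ) ^ 2 - a * b + b ^ 2 = 1 := by exact_mod_cast h'
    push_cast [coe_mk]
    linear_combination h'' - (b : ℂ) ^ 2 * omega_sq_add_omega_add_one

lemma eq_re_add_im_mul_omega (z : ℂ) :
    z = ((z.re + z.im / √3 : ℝ) : ℂ) + ((2 * z.im / √3 : ℝ) : ℂ) * ω := by
  have h3 : √3 ≠ 0 := by positivity
  apply Complex.ext <;>
    simp only [add_re, add_im, mul_re, mul_im, ofReal_re, ofReal_im, re_omega, im_omega] <;>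
    field_simp <;> ring

protected noncomputable def round (z : ℂ) : Eis :=
  mk (round (z.re + z.im / √3)) (round (2 * z.im / √3))

lemma normSq_sub_round_le (z : ℂ) : normSq (z - Eis.round z) ≤ 3 / 4 := by
  set s := z.re + z.im / √3
  set t := 2 * z.im / √3
  have hz : z - Eis.round z = ((s - round s : ℝ) : ℂ) + ((t - round t : ℝ) : ℂ) * ω := by
    rw [Eis.round, coe_mk]
    nth_rewrite 1 [eq_re_add_im_mul_omega z]
    simp only [s, t]
    push_cast; ring
  have hs := abs_le.1 (abs_sub_round s)
  have ht := abs_le.1 (abs_sub_round t)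
  rw [hz, normSq_add_mul_omega]
  nlinarith

lemma norm_sub_mul_round_lt (x : Eis) {y : Eis} (hy : y ≠ 0) :
    Eis.norm (x - y * Eis.round (x / y)) < Eis.norm y := by
  have hyC : (y : ℂ) ≠ 0 := by simpa using hy
  have hy1 : (0 : ℝ) < normSq (y : ℂ) := by rw [← cast_norm]; exact_mod_cast norm_pos hy
  have h : ((x - y * Eis.round (x / y) : Eis) : ℂ) = y * (x / y - Eis.round (x / y)) := by
    push_cast; rw [mul_sub, mul_div_cancel₀ _ hyC]
  rw [← Nat.cast_lt (α := ℝ), cast_norm, cast_norm, h, map_mul]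
  nlinarith [normSq_sub_round_le (x / y : ℂ)]

noncomputable instance : EuclideanDomain Eis where
  quotient x y := Eis.round (x / y)
  quotient_zero x := by simp [Eis.round, mk]
  remainder x y := x - y * Eis.round (x / y)
  quotient_mul_add_remainder_eq x y := by ring
  r := InvImage (· < ·) Eis.norm
  r_wellFounded := InvImage.wf _ wellFounded_lt
  remainder_lt x y hy := norm_sub_mul_round_lt x hy
  mul_left_not_lt x y hy := by
    simpa only [InvImage, norm_mul, not_lt] using Nat.le_mul_of_pos_right _ (norm_pos hy)

lemma three_dvd_mk_sub_mk {a b a' b' : ℤ} (ha : 3 ∣ a - a') (hb : 3 ∣ b - b') :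
    (3 : Eis) ∣ mk a b - mk a' b' := by
  have h : mk a b - mk a' b' = ((a - a' : ℤ) : Eis) + ((b - b' : ℤ) : Eis) * ωE := by
    simp only [mk, Int.cast_sub]; ring
  rw [h]
  exact dvd_add (by exact_mod_cast Int.cast_dvd_cast _ _ ha)
    (dvd_mul_of_dvd_left (by exact_mod_cast Int.cast_dvd_cast _ _ hb) _)

lemma exists_isUnit_three_dvd_sub {x : Eis} (h : IsCoprime x 3) : ∃ v, IsUnit v ∧ 3 ∣ x - v := by
  obtain ⟨a, b, rfl⟩ := exists_eq_mk x
  -- `1 - ω` divides `3 = (1 - ω) (2 + ω)` but has norm `3`, so it cannot divide `x`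
  have hab : ¬ 3 ∣ a + b := by
    intro hab
    have hnu : ¬ IsUnit (mk 1 (-1)) := by
      rw [isUnit_iff_norm_eq_one, ← Nat.cast_inj (R := ℤ), natCast_norm_mk]; norm_num
    have h3 : mk 1 (-1) ∣ 3 :=
      ⟨mk 2 1, Subtype.ext (by push_cast [coe_mk]; linear_combination omega_sq_add_omega_add_one)⟩
    have hx : mk a b = ((a + b : ℤ) : Eis) - b * mk 1 (-1) :=
      Subtype.ext (by push_cast [coe_mk]; ring)
    refine hnu (h.isUnit_of_dvd' ?_ h3)
    rw [hx]
    exact dvd_sub (h3.trans (by exact_mod_cast Int.cast_dvd_cast _ _ hab)) (dvd_mul_left _ _)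
  obtain ⟨a', ha', haa'⟩ : ∃ a' : ℤ, (a' = -1 ∨ a' = 0 ∨ a' = 1) ∧ 3 ∣ a - a' :=
    ⟨(a + 1) % 3 - 1, by omega, by omega⟩
  obtain ⟨b', hb', hbb'⟩ : ∃ b' : ℤ, (b' = -1 ∨ b' = 0 ∨ b' = 1) ∧ 3 ∣ b - b' :=
    ⟨(b + 1) % 3 - 1, by omega, by omega⟩
  -- `mk a' b'` is one of the six units `±1, ±ω, ±(1 + ω)`
  refine ⟨mk a' b', isUnit_iff_norm_eq_one.2 ?_, three_dvd_mk_sub_mk haa' hbb'⟩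
  have hab' : ¬ 3 ∣ a' + b' := by omega
  rw [← Nat.cast_inj (R := ℤ), natCast_norm_mk]
  revert hab'
  rcases ha' with rfl | rfl | rfl <;> rcases hb' with rfl | rfl | rfl <;> norm_num

lemma exists_isUnit_three_dvd_mul_sub_one {x : Eis} (h : IsCoprime x 3) :
    ∃ u, IsUnit u ∧ 3 ∣ u * x - 1 := by
  obtain ⟨_, ⟨v, rfl⟩, hv⟩ := exists_isUnit_three_dvd_sub h
  refine ⟨↑v⁻¹, v⁻¹.isUnit, ?_⟩
  rw [show ↑v⁻¹ * x - 1 = ↑v⁻¹ * (x - v) by rw [mul_sub, Units.inv_mul]]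
  exact dvd_mul_of_dvd_right hv _

lemma isCoprime_three_of_three_dvd_sub_one {x : Eis} (h : 3 ∣ x - 1) : IsCoprime x 3 := by
  obtain ⟨c, hc⟩ := h
  exact ⟨1, -c, by linear_combination hc⟩

lemma exists_eq_mk_of_three_dvd_sub_one {x : Eis} (h : 3 ∣ x - 1) :
    ∃ a b : ℤ, x = mk (3 * a + 1) (3 * b) := by
  obtain ⟨c, hc⟩ := h
  obtain ⟨a, b, rfl⟩ := exists_eq_mk c
  exact ⟨a, b, Subtype.ext (by
    rw [eq_add_of_sub_eq hc]; push_cast [coe_mk]; ring)⟩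

lemma exists_norm_eq_three_mul_add_one {x : Eis} (h : 3 ∣ x - 1) :
    ∃ e : ℕ, Eis.norm x = 3 * e + 1 := by
  obtain ⟨a, b, rfl⟩ := exists_eq_mk_of_three_dvd_sub_one h
  have hN := natCast_norm_mk (3 * a + 1) (3 * b)
  rw [show (3 * a + 1) ^ 2 - (3 * a + 1) * (3 * b) + (3 * b) ^ 2
    = 3 * (2 * a - b + 3 * a ^ 2 - 3 * a * b + 3 * b ^ 2) + 1 by ring] at hN
  generalize 2 * a - b + 3 * a ^ 2 - 3 * a * b + 3 * b ^ 2 = k at hN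
  exact ⟨Eis.norm (mk (3 * a + 1) (3 * b)) / 3, by omega⟩

lemma eq_one_of_isUnit_of_three_dvd_sub_one {x : Eis} (hu : IsUnit x) (h : 3 ∣ x - 1) : x = 1 := by
  obtain ⟨a, b, rfl⟩ := exists_eq_mk_of_three_dvd_sub_one h
  have hN := natCast_norm_mk (3 * a + 1) (3 * b)
  rw [isUnit_iff_norm_eq_one.1 hu, Nat.cast_one] at hN
  obtain rfl : b = 0 := by nlinarith [sq_nonneg (6 * a + 2 - 3 * b)]
  obtain rfl : a = 0 := by nlinarith
  exact Subtype.ext (by simp)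

lemma exists_prime_mul_of_three_dvd_sub_one {n : Eis} (hn : ¬ IsUnit n) (h : 3 ∣ n - 1) :
    ∃ π m, Prime π ∧ 3 ∣ π - 1 ∧ 3 ∣ m - 1 ∧ n = π * m := by
  have hn0 : n ≠ 0 := by
    rintro rfl
    have h3 : IsUnit (3 : Eis) := isUnit_of_dvd_one (by simpa using h)
    simp [isUnit_iff_norm_eq_one, norm_three] at h3
  obtain ⟨p, hp, k, rfl⟩ := WfDvdMonoid.exists_irreducible_factor hn hn0
  obtain ⟨_, ⟨u, rfl⟩, hup⟩ := exists_isUnit_three_dvd_mul_sub_one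
    ((isCoprime_three_of_three_dvd_sub_one h).of_isCoprime_of_dvd_left (dvd_mul_right p k))
  have hpk : p * k = (u * p) * (↑u⁻¹ * k) := by
    rw [show (u : Eis) * p * (↑u⁻¹ * k) = (↑u⁻¹ * ↑u) * (p * k) by ring, Units.inv_mul, one_mul]
  refine ⟨u * p, ↑u⁻¹ * k, (associated_unit_mul_left p u u.isUnit).symm.prime hp.prime, hup, ?_,
    hpk⟩
  have hm : ↑u⁻¹ * k - 1 = (p * k - 1) - (u * p - 1) * (↑u⁻¹ * k) := by rw [hpk]; ring
  rw [hm]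
  exact dvd_sub h (dvd_mul_of_dvd_left hup _)

lemma omegaE_pow_three : ωE ^ 3 = 1 :=
  Subtype.ext (by push_cast; exact omega_pow_three)

end Eis

theorem IsCubicSymbol.apply_omegaE_of_prime {χ : Eis → Eis → ℂ} (hχ : IsCubicSymbol χ) {π : Eis}
    (hπ : Prime π) (h : 3 ∣ π - 1) {e : ℕ} (he : Eis.norm π = 3 * e + 1) : χ π ωE = ω ^ e := by
  have hω : IsCoprime ωE π :=
    ⟨ωE ^ 2, 0, by rw [zero_mul, add_zero, ← pow_succ, Eis.omegaE_pow_three]⟩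
  have he' : normSq (π : ℂ) = 3 * e + 1 := by rw [← Eis.cast_norm, he]; push_cast; ring
  obtain ⟨u, hu, hdvd⟩ := hχ.spec π ωE e hπ (.inl h) hω he'
  have hu3 : (u : ℂ) ^ 3 = 1 := hu ▸ hχ.cube π ωE hπ (.inl h) hω
  rw [← hu]
  by_contra hne
  have h3 : Eis.norm (ωE ^ e - u) = 3 := by
    have : normSq ((ωE ^ e - u : Eis) : ℂ) = 3 := by
      push_cast
      refine normSq_sub_eq_three_of_pow_three_eq_one ?_ hu3 (Ne.symm hne)
      rw [← pow_mul, mul_comm, pow_mul, omega_pow_three, one_pow]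
    exact_mod_cast (Eis.cast_norm _).trans this
  have hle : Eis.norm π ≤ 3 := by
    obtain ⟨c, hc⟩ := hdvd
    exact Nat.le_of_dvd three_pos ⟨Eis.norm c, by rw [← h3, hc, Eis.norm_mul]⟩
  have he0 : e ≠ 0 := by rintro rfl; exact hπ.not_isUnit (Eis.isUnit_iff_norm_eq_one.2 he)
  omega

theorem cubic_symbol_omega_general (χ : Eis → Eis → ℂ) (hχ : IsCubicSymbol χ) (n : Eis)
    (hn : (3 : Eis) ∣ n - 1) (e : ℕ)
    (he : Complex.normSq (n : ℂ) = 3 * e + 1) :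
    χ n ωE = ω ^ e := by
  replace he : Eis.norm n = 3 * e + 1 := by exact_mod_cast (Eis.cast_norm n).trans he
  induction e using Nat.strong_induction_on generalizing n with
  | _ e ih =>
  by_cases hu : IsUnit n
  · obtain rfl := Eis.eq_one_of_isUnit_of_three_dvd_sub_one hu hn
    obtain rfl : e = 0 := by rw [Eis.norm_one] at he; omega
    rw [hχ.map_one_left, pow_zero]
  · obtain ⟨π, m, hπ, hπ1, hm1, rfl⟩ := Eis.exists_prime_mul_of_three_dvd_sub_one hu hn
    obtain ⟨e₁, he₁⟩ := Eis.exists_norm_eq_three_mul_add_one hπ1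
    obtain ⟨e₂, he₂⟩ := Eis.exists_norm_eq_three_mul_add_one hm1
    have he₁0 : e₁ ≠ 0 := by rintro rfl; exact hπ.not_isUnit (Eis.isUnit_iff_norm_eq_one.2 he₁)
    have hmul : 3 * e + 1 = (3 * e₁ + 1) * (3 * e₂ + 1) := by rw [← he, ← he₁, ← he₂, Eis.norm_mul]
    have he₂e : e₂ < e := by nlinarith [Nat.pos_of_ne_zero he₁0]
    rw [hχ.mul_left, hχ.apply_omegaE_of_prime hπ hπ1 he₁, ih e₂ he₂e m hm1 he₂,
      omega_pow_eq_mul_of_three_mul_add_one hmul]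

theorem cubic_symbol_omega (χ : Eis → Eis → ℂ) (hχ : IsCubicSymbol χ) (n : Eis)
    (hn : (3 : Eis) ∣ n - 1) (hcop : IsCoprime n 3) (e : ℕ)
    (he : Complex.normSq (n : ℂ) = 3 * e + 1) :
    χ n ωE = ω ^ e :=
  cubic_symbol_omega_general χ hχ n hn e he
end

section
/- Optimization lemma: Suppose L(H) = Σ_{i=1}^m A_i H^{a_i} + Σ_{j=1}^n B_j H^{−b_j} where all A_i, B_j, a_i, b_j are positive reals, and let 0 < H₁ ≤ H₂. Then there exists H with H₁ ≤ H ≤ H₂ such that L(H) ≪ Σ_{i,j} (A_i^{b_j} B_j^{a_i})^{1/(a_i+b_j)} + Σ_i A_i H₁^{a_i} + Σ_j B_j H₂^{−b_j}, where the implied constant depends only on m and n. -/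
open Finset Real Set

/-! The constant can be taken to be `2`, independently of `m` and `n`. If one of the two sums
dominates the other at the matching endpoint (the increasing one at `H₁`, the decreasing one at
`H₂`), that endpoint works. Otherwise the intermediate value theorem gives a balancing point `H`
where both sums agree, so `L(H)` is twice their minimum. The minimum of two sums of nonnegative
terms is at most the double sum of the pairwise minima, and `min (A H^a) (B H^(-b))` is at most
the weighted geometric mean `(A^b B^a)^(1/(a+b))`, in which `H` cancels. -/

theorem min_sum_le_sum_min {ι : Type*} (s : Finset ι) {c : ℝ} {y : ι → ℝ} (hc : 0 ≤ c)
    (hy : ∀ j ∈ s, 0 ≤ y j) : min c (∑ j ∈ s, y j) ≤ ∑ j ∈ s, min c (y j) := by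
  by_cases hbig : ∃ j ∈ s, c ≤ y j
  · obtain ⟨j, hj, hcy⟩ := hbig
    calc min c (∑ j ∈ s, y j) ≤ min c (y j) := by rw [min_eq_left hcy]; exact min_le_left _ _
      _ ≤ ∑ j ∈ s, min c (y j) :=
        single_le_sum (fun k hk => le_min hc (hy k hk)) hj
  · push Not at hbig
    calc min c (∑ j ∈ s, y j) ≤ ∑ j ∈ s, y j := min_le_right _ _
      _ = ∑ j ∈ s, min c (y j) := sum_congr rfl fun j hj => (min_eq_right (hbig j hj).le).symm

theorem min_sum_sum_le_sum_sum_min {ι κ : Type*} (s : Finset ι) (t : Finset κ) {x : ι → ℝ}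
    {y : κ → ℝ} (hx : ∀ i ∈ s, 0 ≤ x i) (hy : ∀ j ∈ t, 0 ≤ y j) :
    min (∑ i ∈ s, x i) (∑ j ∈ t, y j) ≤ ∑ i ∈ s, ∑ j ∈ t, min (x i) (y j) := by
  calc min (∑ i ∈ s, x i) (∑ j ∈ t, y j)
      ≤ ∑ j ∈ t, min (y j) (∑ i ∈ s, x i) := by
        simpa only [min_comm] using min_sum_le_sum_min t (sum_nonneg hx) hy
    _ ≤ ∑ j ∈ t, ∑ i ∈ s, min (y j) (x i) :=
        sum_le_sum fun j hj => min_sum_le_sum_min s (hy j hj) hx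
    _ = ∑ i ∈ s, ∑ j ∈ t, min (x i) (y j) := by
        rw [sum_comm]; simp only [min_comm]

theorem min_le_rpow_mul_rpow_one_div {x y a b : ℝ} (hx : 0 ≤ x) (hy : 0 ≤ y) (ha : 0 ≤ a)
    (hb : 0 ≤ b) (hab : 0 < a + b) : min x y ≤ (x ^ b * y ^ a) ^ (1 / (a + b)) := by
  have hmin : 0 ≤ min x y := le_min hx hy
  have hpow : min x y ^ (a + b) ≤ x ^ b * y ^ a := by
    rw [rpow_add' hmin hab.ne', mul_comm]
    exact mul_le_mul (rpow_le_rpow hmin (min_le_left x y) hb)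
      (rpow_le_rpow hmin (min_le_right x y) ha) (by positivity) (by positivity)
  calc min x y = (min x y ^ (a + b)) ^ (1 / (a + b)) := by
        rw [← rpow_mul hmin, mul_one_div_cancel hab.ne', rpow_one]
    _ ≤ (x ^ b * y ^ a) ^ (1 / (a + b)) :=
        rpow_le_rpow (by positivity) hpow (by positivity)

theorem min_mul_rpow_mul_rpow_neg_le {A B H a b : ℝ} (hA : 0 ≤ A) (hB : 0 ≤ B) (hH : 0 < H)
    (ha : 0 ≤ a) (hb : 0 ≤ b) (hab : 0 < a + b) :
    min (A * H ^ a) (B * H ^ (-b)) ≤ (A ^ b * B ^ a) ^ (1 / (a + b)) := by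
  have hcancel : (A * H ^ a) ^ b * (B * H ^ (-b)) ^ a = A ^ b * B ^ a := by
    rw [mul_rpow hA (by positivity), mul_rpow hB (by positivity), ← rpow_mul hH.le,
      ← rpow_mul hH.le, mul_mul_mul_comm, ← rpow_add hH, mul_comm a b, neg_mul, add_neg_cancel,
      rpow_zero, mul_one]
  rw [← hcancel]
  exact min_le_rpow_mul_rpow_one_div (by positivity) (by positivity) ha hb hab

theorem exists_mem_Icc_add_le_two_mul_max {f g : ℝ → ℝ} {H₁ H₂ : ℝ} (hH : H₁ ≤ H₂)
    (hf : ContinuousOn f (Icc H₁ H₂)) (hg : ContinuousOn g (Icc H₁ H₂)) :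
    ∃ H ∈ Icc H₁ H₂, f H + g H ≤ 2 * max (min (f H) (g H)) (max (f H₁) (g H₂)) := by
  by_cases h₁ : g H₁ ≤ f H₁
  · refine ⟨H₁, left_mem_Icc.2 hH, ?_⟩
    have := le_max_left (f H₁) (g H₂)
    have := le_max_right (min (f H₁) (g H₁)) (max (f H₁) (g H₂))
    linarith
  by_cases h₂ : f H₂ ≤ g H₂
  · refine ⟨H₂, right_mem_Icc.2 hH, ?_⟩
    have := le_max_right (f H₁) (g H₂)
    have := le_max_right (min (f H₂) (g H₂)) (max (f H₁) (g H₂))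
    linarith
  push Not at h₁ h₂
  obtain ⟨H, hH, hfg⟩ := intermediate_value_Icc hH (hf.sub hg)
    (show (0 : ℝ) ∈ Icc (f H₁ - g H₁) (f H₂ - g H₂) from ⟨by linarith, by linarith⟩)
  have hfg : f H = g H := sub_eq_zero.1 hfg
  refine ⟨H, hH, ?_⟩
  rw [hfg, min_self]
  linarith [le_max_left (g H) (max (f H₁) (g H₂))]

/-- Lemma 2.4 of Graham–Kolesnik: optimization of a sum of increasing and decreasing
power functions of a parameter `H` restricted to `[H₁, H₂]`; the constant `C` depends
only on `m` and `n`. -/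
theorem graham_kolesnik_optimization (m n : ℕ) :
    ∃ C : ℝ, 0 < C ∧ ∀ (A a : Fin m → ℝ) (B b : Fin n → ℝ),
      (∀ i, 0 < A i) → (∀ i, 0 < a i) → (∀ j, 0 < B j) → (∀ j, 0 < b j) →
      ∀ H₁ H₂ : ℝ, 0 < H₁ → H₁ ≤ H₂ →
      ∃ H : ℝ, H₁ ≤ H ∧ H ≤ H₂ ∧
        (∑ i, A i * H ^ (a i)) + (∑ j, B j * H ^ (-(b j))) ≤
          C * ((∑ i, ∑ j, (A i ^ (b j) * B j ^ (a i)) ^ (1 / (a i + b j))) +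
            (∑ i, A i * H₁ ^ (a i)) + (∑ j, B j * H₂ ^ (-(b j)))) := by
  refine ⟨2, two_pos, fun A a B b hA ha hB hb H₁ H₂ hH₁ hH => ?_⟩
  have hcont : ∀ (c e : ℝ), ContinuousOn (fun H : ℝ => c * H ^ e) (Icc H₁ H₂) := fun c e =>
    continuousOn_const.mul <| continuousOn_id.rpow_const fun H hH' =>
      Or.inl (hH₁.trans_le hH'.1).ne'
  obtain ⟨H, ⟨hH₁H, hHH₂⟩, hL⟩ := exists_mem_Icc_add_le_two_mul_max hH
    (continuousOn_finsetSum _ fun i _ => hcont (A i) (a i))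
    (continuousOn_finsetSum _ fun j _ => hcont (B j) (-b j))
  have hHpos : 0 < H := hH₁.trans_le hH₁H
  have hbalanced : min (∑ i, A i * H ^ (a i)) (∑ j, B j * H ^ (-(b j))) ≤
      ∑ i, ∑ j, (A i ^ (b j) * B j ^ (a i)) ^ (1 / (a i + b j)) :=
    (min_sum_sum_le_sum_sum_min _ _ (fun i _ => by have := hA i; positivity)
      (fun j _ => by have := hB j; positivity)).trans <| sum_le_sum fun i _ => sum_le_sum
        fun j _ => min_mul_rpow_mul_rpow_neg_le (hA i).le (hB j).le hHpos (ha i).le (hb j).le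
          (add_pos (ha i) (hb j))
  have hleft : 0 ≤ ∑ i, A i * H₁ ^ (a i) := sum_nonneg fun i _ => by have := hA i; positivity
  have hright : 0 ≤ ∑ j, B j * H₂ ^ (-(b j)) := sum_nonneg fun j _ => by
    have := hB j; have := hH₁.trans_le hH; positivity
  have hsum : 0 ≤ ∑ i, ∑ j, (A i ^ (b j) * B j ^ (a i)) ^ (1 / (a i + b j)) :=
    sum_nonneg fun i _ => sum_nonneg fun j _ => by have := hA i; have := hB j; positivity
  refine ⟨H, hH₁H, hHH₂, hL.trans ?_⟩
  gcongr
  exact max_le (by linarith) (max_le (by linarith) (by linarith))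
end

section
/- Euler product identity: for a completely multiplicative function ψ on ideals of a number field K with |ψ(𝔭)| ≤ 1, and for Re(s) > 1, one has Σ over squarefree ideals 𝔮 of ψ(𝔮) N(𝔮)^{−s} Σ_{𝔟 | 𝔮} ψ(𝔟) = Π_𝔭 (1 + ψ(𝔭)(1+ψ(𝔭)) N(𝔭)^{−s}), and this equals L(s,ψ) L(s,ψ²) F(s) where F(s) = Π_𝔭 (1 − (ψ²(𝔭)+ψ³(𝔭)+ψ⁴(𝔭)) N(𝔭)^{−2s} + (ψ⁴(𝔭)+ψ⁵(𝔭)) N(𝔭)^{−3s}) converges absolutely for Re(s) > 1/2. -/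
/-!
Squarefree ideals are the products `∏_{𝔭 ∈ S} 𝔭` over finite sets `S` of nonzero primes, and the
divisors of such a product are the products over subsets of `S`. For a multiplicative `ψ` the
summand attached to `S` is therefore `∏_{𝔭 ∈ S} ψ(𝔭)(1 + ψ(𝔭)) N𝔭^{-s}`, and summing over all
finite `S` expands the Euler product `∏_𝔭 (1 + ψ(𝔭)(1 + ψ(𝔭)) N𝔭^{-s})`.

Everything converges absolutely because `∑_𝔭 N𝔭^{-σ} < ∞` for `σ > 1`: each `𝔭` contains a
rational prime `p ≤ N𝔭`, and at most `[K : ℚ]` primes contain a given `p`, since the norm of their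
product divides `N(p) = p^[K : ℚ]`. Multiplying the Euler factor by `(1 - ψ(𝔭)t)(1 - ψ(𝔭)²t)`,
`t = N𝔭^{-s}`, gives the cubic factor of `F`, whose non-constant terms are `O(N𝔭^{-2σ})`.
-/

open scoped NumberField

open UniqueFactorizationMonoid

section InfiniteProduct

variable {ι 𝕜 : Type*} [NormedField 𝕜] [CompleteSpace 𝕜]

theorem multipliable_one_sub_of_summable {u : ι → 𝕜} (hu : Summable (‖u ·‖)) :
    Multipliable (1 - u ·) := by
  simpa [sub_eq_add_neg] using multipliable_one_add_of_summable (f := (-u ·)) (by simpa using hu)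

theorem tprod_one_sub_ne_zero_of_summable {u : ι → 𝕜} (hu : Summable (‖u ·‖))
    (hu1 : ∀ i, 1 - u i ≠ 0) : ∏' i, (1 - u i) ≠ 0 := by
  simpa [sub_eq_add_neg] using
    tprod_one_add_ne_zero_of_summable (f := (-u ·)) (by simpa [sub_eq_add_neg] using hu1)
      (by simpa using hu)

theorem tprod_one_add_eq_tprod_inv_mul_tprod_inv_mul {u v w : ι → 𝕜}
    (hu : Summable (‖u ·‖)) (hv : Summable (‖v ·‖)) (hw : Summable (‖w ·‖))
    (hu1 : ∀ i, 1 - u i ≠ 0) (hv1 : ∀ i, 1 - v i ≠ 0) :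
    ∏' i, (1 + w i) = (∏' i, (1 - u i)⁻¹) * (∏' i, (1 - v i)⁻¹) *
      ∏' i, (1 - u i) * (1 - v i) * (1 + w i) := by
  have hmu := multipliable_one_sub_of_summable hu
  have hmv := multipliable_one_sub_of_summable hv
  rw [(hmu.mul hmv).tprod_mul (multipliable_one_add_of_summable hw), hmu.tprod_mul hmv,
    hmu.tprod_inv₀ (tprod_one_sub_ne_zero_of_summable hu hu1),
    hmv.tprod_inv₀ (tprod_one_sub_ne_zero_of_summable hv hv1)]
  field_simp [tprod_one_sub_ne_zero_of_summable hu hu1, tprod_one_sub_ne_zero_of_summable hv hv1]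

end InfiniteProduct

theorem one_sub_mul_mul_one_sub_sq_mul_mul_one_add_mul {R : Type*} [CommRing R] (x t : R) :
    (1 - x * t) * (1 - x ^ 2 * t) * (1 + x * (1 + x) * t) =
      1 - (x ^ 2 + x ^ 3 + x ^ 4) * t ^ 2 + (x ^ 4 + x ^ 5) * t ^ 3 := by
  ring

theorem Summable.comp_of_card_fiber_le {ι κ : Type*} {h : κ → ℝ} (hh : Summable h)
    (hh0 : ∀ k, 0 ≤ h k) (g : ι → κ) (n : ℕ)
    (hg : ∀ k (T : Finset ι), (∀ i ∈ T, g i = k) → T.card ≤ n) :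
    Summable (h ∘ g) := by
  classical
  refine summable_of_sum_le (c := n * ∑' k, h k) (fun i ↦ hh0 (g i)) fun T ↦ ?_
  calc ∑ i ∈ T, h (g i) = ∑ k ∈ T.image g, (T.filter (g · = k)).card • h k := Finset.sum_comp h g
    _ ≤ ∑ k ∈ T.image g, n * h k := by
        refine Finset.sum_le_sum fun k _ ↦ ?_
        rw [nsmul_eq_mul]
        gcongr
        · exact hh0 k
        · exact hg k _ fun i hi ↦ (Finset.mem_filter.1 hi).2
    _ ≤ n * ∑' k, h k := by
        rw [← Finset.mul_sum]
        gcongr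
        exact hh.sum_le_tsum _ fun k _ ↦ hh0 k

abbrev NonzeroPrimeIdeal (R : Type*) [CommRing R] := {I : Ideal R // I.IsPrime ∧ I ≠ ⊥}

namespace NonzeroPrimeIdeal

variable {R : Type*} [CommRing R] [IsDedekindDomain R]

theorem prime (𝔭 : NonzeroPrimeIdeal R) : Prime 𝔭.1 := Ideal.prime_of_isPrime 𝔭.2.2 𝔭.2.1

theorem prod_ne_zero (S : Finset (NonzeroPrimeIdeal R)) : ∏ 𝔭 ∈ S, 𝔭.1 ≠ 0 :=
  Finset.prod_ne_zero_iff.2 fun 𝔭 _ ↦ 𝔭.prime.ne_zero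

theorem normalizedFactors_prod (S : Finset (NonzeroPrimeIdeal R)) :
    normalizedFactors (∏ 𝔭 ∈ S, 𝔭.1) = S.val.map Subtype.val := by
  rw [Finset.prod_eq_multiset_prod, ← Multiset.map_id (S.val.map _),
    normalizedFactors_prod_of_prime]
  intro p hp
  rw [Multiset.map_id] at hp
  obtain ⟨𝔭, -, rfl⟩ := Multiset.mem_map.1 hp
  exact 𝔭.prime

theorem prod_dvd_prod_iff {S T : Finset (NonzeroPrimeIdeal R)} :
    ∏ 𝔭 ∈ T, 𝔭.1 ∣ ∏ 𝔭 ∈ S, 𝔭.1 ↔ T ⊆ S := by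
  rw [dvd_iff_normalizedFactors_le_normalizedFactors (prod_ne_zero T) (prod_ne_zero S),
    normalizedFactors_prod, normalizedFactors_prod, Multiset.map_le_map_iff Subtype.val_injective,
    Finset.val_le_iff]

theorem prod_injective : Function.Injective fun S : Finset (NonzeroPrimeIdeal R) ↦ ∏ 𝔭 ∈ S, 𝔭.1 :=
  fun _ _ h ↦ (prod_dvd_prod_iff.1 h.dvd).antisymm (prod_dvd_prod_iff.1 h.symm.dvd)

theorem squarefree_prod (S : Finset (NonzeroPrimeIdeal R)) : Squarefree (∏ 𝔭 ∈ S, 𝔭.1) := by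
  rw [squarefree_iff_nodup_normalizedFactors (prod_ne_zero S), normalizedFactors_prod]
  exact S.nodup.map Subtype.val_injective

theorem exists_prod_eq_of_squarefree {I : Ideal R} (hI : Squarefree I) :
    ∃ S : Finset (NonzeroPrimeIdeal R), ∏ 𝔭 ∈ S, 𝔭.1 = I := by
  classical
  have hmem : ∀ J ∈ normalizedFactors I, J.IsPrime ∧ J ≠ ⊥ := fun J hJ ↦
    have hJ := prime_of_normalized_factor J hJ
    ⟨Ideal.isPrime_of_prime hJ, hJ.ne_zero⟩
  let s : Finset (Ideal R) :=
    ⟨normalizedFactors I, (squarefree_iff_nodup_normalizedFactors hI.ne_zero).1 hI⟩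
  refine ⟨s.subtype _, ?_⟩
  rw [Finset.prod_subtype_of_mem (fun J ↦ J) hmem, Finset.prod_eq_multiset_prod]
  simpa [s] using Ideal.prod_normalizedFactors_eq_self hI.ne_zero

theorem dvd_prod_iff {J : Ideal R} {S : Finset (NonzeroPrimeIdeal R)} :
    J ∣ ∏ 𝔭 ∈ S, 𝔭.1 ↔ ∃ T ⊆ S, ∏ 𝔭 ∈ T, 𝔭.1 = J := by
  refine ⟨fun h ↦ ?_, fun ⟨T, hT, hTJ⟩ ↦ hTJ ▸ prod_dvd_prod_iff.2 hT⟩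
  obtain ⟨T, rfl⟩ := exists_prod_eq_of_squarefree ((squarefree_prod S).squarefree_of_dvd h)
  exact ⟨T, prod_dvd_prod_iff.1 h, rfl⟩

noncomputable def squarefreeEquiv : Finset (NonzeroPrimeIdeal R) ≃ {I : Ideal R // Squarefree I} :=
  Equiv.ofBijective (fun S ↦ ⟨∏ 𝔭 ∈ S, 𝔭.1, squarefree_prod S⟩)
    ⟨fun _ _ h ↦ prod_injective (congrArg Subtype.val h), fun ⟨_, hI⟩ ↦
      (exists_prod_eq_of_squarefree hI).imp fun _ h ↦ Subtype.ext h⟩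

noncomputable def powersetEquivDvdProd (S : Finset (NonzeroPrimeIdeal R)) :
    S.powerset ≃ {J : Ideal R // J ∣ ∏ 𝔭 ∈ S, 𝔭.1} :=
  Equiv.ofBijective
    (fun T ↦ ⟨∏ 𝔭 ∈ T.1, 𝔭.1, prod_dvd_prod_iff.2 (Finset.mem_powerset.1 T.2)⟩)
    ⟨fun _ _ h ↦ Subtype.ext (prod_injective (congrArg Subtype.val h)), fun ⟨_, hJ⟩ ↦
      (dvd_prod_iff.1 hJ).elim fun T ⟨hT, h⟩ ↦ ⟨⟨T, Finset.mem_powerset.2 hT⟩, Subtype.ext h⟩⟩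

variable {M : Type*} [CommSemiring M] [TopologicalSpace M]

theorem tsum_dvd_prod (χ : Ideal R →* M) (S : Finset (NonzeroPrimeIdeal R)) :
    ∑' 𝔟 : {J : Ideal R // J ∣ ∏ 𝔭 ∈ S, 𝔭.1}, χ 𝔟 = ∏ 𝔭 ∈ S, (1 + χ 𝔭.1) := by
  rw [← (powersetEquivDvdProd S).tsum_eq, Finset.prod_one_add]
  simp [powersetEquivDvdProd, Finset.sum_attach S.powerset fun T ↦ ∏ 𝔭 ∈ T, χ 𝔭.1]

theorem tsum_squarefree_mul_tsum_dvd (η χ : Ideal R →* M) :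
    ∑' 𝔮 : {I : Ideal R // Squarefree I}, η 𝔮 * ∑' 𝔟 : {J : Ideal R // J ∣ 𝔮.1}, χ 𝔟 =
      ∑' S : Finset (NonzeroPrimeIdeal R), ∏ 𝔭 ∈ S, η 𝔭.1 * (1 + χ 𝔭.1) := by
  rw [← squarefreeEquiv.tsum_eq]
  refine tsum_congr fun S ↦ ?_
  change η (∏ 𝔭 ∈ S, 𝔭.1) * ∑' 𝔟 : {J : Ideal R // J ∣ ∏ 𝔭 ∈ S, 𝔭.1}, χ 𝔟 = _
  rw [tsum_dvd_prod, map_prod, Finset.prod_mul_distrib]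

end NonzeroPrimeIdeal

namespace Ideal

variable {S : Type*} [CommRing S] [IsDedekindDomain S] [Module.Free ℤ S]

noncomputable def absNormCpow (s : ℂ) : Ideal S →* ℂ where
  toFun I := (absNorm I : ℂ) ^ s
  map_one' := by simp
  map_mul' I J := by rw [map_mul, Nat.cast_mul, Complex.natCast_mul_natCast_cpow]

end Ideal

namespace NonzeroPrimeIdeal

variable {S : Type*} [CommRing S] [IsDedekindDomain S] [Module.Free ℤ S]

theorem tsum_squarefree_eq_tprod (χ : Ideal S →* ℂ) {z : ℂ}
    (h : Summable fun 𝔭 : NonzeroPrimeIdeal S ↦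
      ‖χ 𝔭.1 * (1 + χ 𝔭.1) * (Ideal.absNorm 𝔭.1 : ℂ) ^ z‖) :
    ∑' 𝔮 : {I : Ideal S // Squarefree I},
        χ 𝔮.1 * (Ideal.absNorm 𝔮.1 : ℂ) ^ z * ∑' 𝔟 : {J : Ideal S // J ∣ 𝔮.1}, χ 𝔟.1 =
      ∏' 𝔭 : NonzeroPrimeIdeal S, (1 + χ 𝔭.1 * (1 + χ 𝔭.1) * (Ideal.absNorm 𝔭.1 : ℂ) ^ z) := by
  rw [tprod_one_add (summable_finsetProd_of_summable_norm h)]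
  refine (tsum_squarefree_mul_tsum_dvd (χ * Ideal.absNormCpow z) χ).trans
    (tsum_congr fun T ↦ Finset.prod_congr rfl fun 𝔭 _ ↦ ?_)
  change χ 𝔭.1 * (Ideal.absNorm 𝔭.1 : ℂ) ^ z * (1 + χ 𝔭.1) = _
  ring

variable [Module.Finite ℤ S]

theorem one_lt_absNorm (𝔭 : NonzeroPrimeIdeal S) : 1 < Ideal.absNorm 𝔭.1 := by
  have h0 : Ideal.absNorm 𝔭.1 ≠ 0 := Ideal.absNorm_eq_zero_iff.not.2 𝔭.2.2
  have h1 : Ideal.absNorm 𝔭.1 ≠ 1 := Ideal.absNorm_eq_one_iff.not.2 𝔭.2.1.ne_top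
  omega

theorem exists_natCast_mem (𝔭 : NonzeroPrimeIdeal S) : ∃ p : ℕ, p.Prime ∧ (p : S) ∈ 𝔭.1 := by
  have := 𝔭.2.1.isMaximal 𝔭.2.2
  obtain ⟨p, -, -, hp, hmem, -⟩ := Ideal.exists_prime_and_absNorm_eq_pow 𝔭.1
  exact ⟨p, hmem, hp⟩

theorem absNorm_dvd_pow_finrank {𝔭 : NonzeroPrimeIdeal S} {p : ℕ} (h : (p : S) ∈ 𝔭.1) :
    Ideal.absNorm 𝔭.1 ∣ p ^ Module.finrank ℤ S := by
  rw [← Ideal.absNorm_span_natCast]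
  exact map_dvd _ (Ideal.dvd_iff_le.2 ((Ideal.span_singleton_le_iff_mem _).2 h))

theorem le_absNorm_of_natCast_mem {𝔭 : NonzeroPrimeIdeal S} {p : ℕ} (hp : p.Prime)
    (h : (p : S) ∈ 𝔭.1) : p ≤ Ideal.absNorm 𝔭.1 := by
  obtain ⟨i, -, hi⟩ := (Nat.dvd_prime_pow hp).1 (absNorm_dvd_pow_finrank h)
  have hi0 : i ≠ 0 := by rintro rfl; simpa [hi] using 𝔭.one_lt_absNorm
  rw [hi]
  exact Nat.le_self_pow hi0 p

theorem card_le_finrank_of_natCast_mem {p : ℕ} (hp : p.Prime) (T : Finset (NonzeroPrimeIdeal S))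
    (hT : ∀ 𝔭 ∈ T, (p : S) ∈ 𝔭.1) : T.card ≤ Module.finrank ℤ S := by
  have hdvd : ∏ 𝔭 ∈ T, 𝔭.1 ∣ Ideal.span {(p : S)} := by
    classical
    rw [← Finset.prod_image (f := fun I : Ideal S ↦ I) fun _ _ _ _ h ↦ Subtype.ext h]
    refine Finset.prod_primes_dvd _ (fun I hI ↦ ?_) fun I hI ↦ ?_ <;>
      obtain ⟨𝔭, h𝔭, rfl⟩ := Finset.mem_image.1 hI
    · exact prime 𝔭
    · exact Ideal.dvd_iff_le.2 ((Ideal.span_singleton_le_iff_mem _).2 (hT 𝔭 h𝔭))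
  refine (Nat.pow_le_pow_iff_right hp.one_lt).1 ?_
  calc p ^ T.card ≤ ∏ 𝔭 ∈ T, Ideal.absNorm 𝔭.1 :=
        Finset.pow_card_le_prod _ _ _ fun 𝔭 h𝔭 ↦ le_absNorm_of_natCast_mem hp (hT 𝔭 h𝔭)
    _ = Ideal.absNorm (∏ 𝔭 ∈ T, 𝔭.1) := (map_prod _ _ _).symm
    _ ≤ p ^ Module.finrank ℤ S := Nat.le_of_dvd (pow_pos hp.pos _)
        (Ideal.absNorm_span_natCast (S := S) p ▸ map_dvd Ideal.absNorm hdvd)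

theorem summable_absNorm_rpow {r : ℝ} (hr : r < -1) :
    Summable fun 𝔭 : NonzeroPrimeIdeal S ↦ (Ideal.absNorm 𝔭.1 : ℝ) ^ r := by
  choose p hp hmem using exists_natCast_mem (S := S)
  refine ((Real.summable_nat_rpow.2 hr).comp_of_card_fiber_le (fun _ ↦ by positivity) p
    (Module.finrank ℤ S) fun k T hT ↦ ?_).of_nonneg_of_le (fun _ ↦ by positivity) fun 𝔭 ↦ ?_
  · obtain rfl | ⟨𝔭, h𝔭⟩ := T.eq_empty_or_nonempty
    · simp
    · exact card_le_finrank_of_natCast_mem (hT 𝔭 h𝔭 ▸ hp 𝔭) T fun 𝔮 h𝔮 ↦ hT 𝔮 h𝔮 ▸ hmem 𝔮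
  · exact Real.rpow_le_rpow_of_nonpos (by exact_mod_cast (hp 𝔭).pos)
      (by exact_mod_cast le_absNorm_of_natCast_mem (hp 𝔭) (hmem 𝔭)) (by linarith)

theorem summable_norm_mul_absNorm_cpow {c : NonzeroPrimeIdeal S → ℂ} {C : ℝ}
    (hc : ∀ 𝔭, ‖c 𝔭‖ ≤ C) {z : ℂ} (hz : z.re < -1) :
    Summable fun 𝔭 : NonzeroPrimeIdeal S ↦ ‖c 𝔭 * (Ideal.absNorm 𝔭.1 : ℂ) ^ z‖ := by
  refine ((summable_absNorm_rpow hz).mul_left C).of_nonneg_of_le (fun _ ↦ norm_nonneg _)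
    fun 𝔭 ↦ ?_
  rw [norm_mul, Complex.norm_natCast_cpow_of_pos (zero_lt_one.trans (one_lt_absNorm 𝔭))]
  exact mul_le_mul_of_nonneg_right (hc 𝔭) (by positivity)

theorem one_sub_mul_absNorm_cpow_ne_zero (𝔭 : NonzeroPrimeIdeal S) {c : ℂ} (hc : ‖c‖ ≤ 1)
    {z : ℂ} (hz : z.re < 0) : 1 - c * (Ideal.absNorm 𝔭.1 : ℂ) ^ z ≠ 0 := by
  refine sub_ne_zero.2 fun h ↦ ?_
  have hlt : ‖(Ideal.absNorm 𝔭.1 : ℂ) ^ z‖ < 1 := by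
    rw [Complex.norm_natCast_cpow_of_pos (zero_lt_one.trans (one_lt_absNorm 𝔭))]
    exact Real.rpow_lt_one_of_one_lt_of_neg (by exact_mod_cast one_lt_absNorm 𝔭) hz
  have := congrArg norm h
  rw [norm_one, norm_mul] at this
  nlinarith [norm_nonneg c, norm_nonneg ((Ideal.absNorm 𝔭.1 : ℂ) ^ z)]

theorem multipliable_one_sub_mul_absNorm_cpow_add_mul {c₂ c₃ : NonzeroPrimeIdeal S → ℂ}
    {C₂ C₃ : ℝ} (hc₂ : ∀ 𝔭, ‖c₂ 𝔭‖ ≤ C₂) (hc₃ : ∀ 𝔭, ‖c₃ 𝔭‖ ≤ C₃) {z₂ z₃ : ℂ}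
    (hz₂ : z₂.re < -1) (hz₃ : z₃.re < -1) :
    Multipliable fun 𝔭 : NonzeroPrimeIdeal S ↦
      1 - c₂ 𝔭 * (Ideal.absNorm 𝔭.1 : ℂ) ^ z₂ + c₃ 𝔭 * (Ideal.absNorm 𝔭.1 : ℂ) ^ z₃ := by
  have h := (summable_norm_mul_absNorm_cpow hc₃ hz₃).add (summable_norm_mul_absNorm_cpow hc₂ hz₂)
  refine (multipliable_one_add_of_summable (h.of_nonneg_of_le (fun _ ↦ norm_nonneg _)
    fun 𝔭 ↦ norm_sub_le (E := ℂ) _ _)).congr fun 𝔭 ↦ ?_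
  ring

end NonzeroPrimeIdeal

open NonzeroPrimeIdeal in
/-- Euler product identity for the squarefree-supported Dirichlet series
`Σ_{𝔮 squarefree} ψ(𝔮) N(𝔮)^{-s} Σ_{𝔟 ∣ 𝔮} ψ(𝔟)`: it equals
`Π_𝔭 (1 + ψ(𝔭)(1+ψ(𝔭)) N(𝔭)^{-s}) = L(s,ψ) L(s,ψ²) F(s)` for `Re s > 1`, where
`F(s) = Π_𝔭 (1 - (ψ²(𝔭)+ψ³(𝔭)+ψ⁴(𝔭)) N(𝔭)^{-2s} + (ψ⁴(𝔭)+ψ⁵(𝔭)) N(𝔭)^{-3s})`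
converges absolutely for `Re s > 1/2`. -/
theorem euler_product_squarefree_series (K : Type*) [Field K] [NumberField K]
    (ψ : Ideal (𝓞 K) → ℂ) (hψ1 : ψ 1 = 1) (hψm : ∀ I J, ψ (I * J) = ψ I * ψ J)
    (hbd : ∀ 𝔭 : Ideal (𝓞 K), 𝔭.IsPrime → ‖ψ 𝔭‖ ≤ 1)
    (s : ℂ) (hs : 1 < s.re) :
    (∑' 𝔮 : {I : Ideal (𝓞 K) // Squarefree I},
        ψ 𝔮.1 * (Ideal.absNorm 𝔮.1 : ℂ) ^ (-s) * ∑' 𝔟 : {J : Ideal (𝓞 K) // J ∣ 𝔮.1}, ψ 𝔟.1) =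
      (∏' 𝔭 : {I : Ideal (𝓞 K) // I.IsPrime ∧ I ≠ ⊥},
        (1 + ψ 𝔭.1 * (1 + ψ 𝔭.1) * (Ideal.absNorm 𝔭.1 : ℂ) ^ (-s))) ∧
    (∑' 𝔮 : {I : Ideal (𝓞 K) // Squarefree I},
        ψ 𝔮.1 * (Ideal.absNorm 𝔮.1 : ℂ) ^ (-s) * ∑' 𝔟 : {J : Ideal (𝓞 K) // J ∣ 𝔮.1}, ψ 𝔟.1) =
      (∏' 𝔭 : {I : Ideal (𝓞 K) // I.IsPrime ∧ I ≠ ⊥},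
          (1 - ψ 𝔭.1 * (Ideal.absNorm 𝔭.1 : ℂ) ^ (-s))⁻¹) *
      (∏' 𝔭 : {I : Ideal (𝓞 K) // I.IsPrime ∧ I ≠ ⊥},
          (1 - (ψ 𝔭.1) ^ 2 * (Ideal.absNorm 𝔭.1 : ℂ) ^ (-s))⁻¹) *
      (∏' 𝔭 : {I : Ideal (𝓞 K) // I.IsPrime ∧ I ≠ ⊥},
          (1 - ((ψ 𝔭.1) ^ 2 + (ψ 𝔭.1) ^ 3 + (ψ 𝔭.1) ^ 4) * (Ideal.absNorm 𝔭.1 : ℂ) ^ (-(2 * s))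
             + ((ψ 𝔭.1) ^ 4 + (ψ 𝔭.1) ^ 5) * (Ideal.absNorm 𝔭.1 : ℂ) ^ (-(3 * s)))) ∧
    (∀ s' : ℂ, 1 / 2 < s'.re →
      Multipliable (fun 𝔭 : {I : Ideal (𝓞 K) // I.IsPrime ∧ I ≠ ⊥} =>
        (1 - ((ψ 𝔭.1) ^ 2 + (ψ 𝔭.1) ^ 3 + (ψ 𝔭.1) ^ 4) * (Ideal.absNorm 𝔭.1 : ℂ) ^ (-(2 * s'))
           + ((ψ 𝔭.1) ^ 4 + (ψ 𝔭.1) ^ 5) * (Ideal.absNorm 𝔭.1 : ℂ) ^ (-(3 * s'))))) := by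
  obtain ⟨Ψ, rfl⟩ : ∃ Ψ : Ideal (𝓞 K) →* ℂ, ⇑Ψ = ψ := ⟨⟨⟨ψ, hψ1⟩, hψm⟩, rfl⟩
  have hψ (k : ℕ) (𝔭 : NonzeroPrimeIdeal (𝓞 K)) : ‖Ψ 𝔭.1 ^ k‖ ≤ 1 := by
    simpa using pow_le_one₀ (norm_nonneg _) (hbd 𝔭.1 𝔭.2.1)
  have hψ₁ (𝔭 : NonzeroPrimeIdeal (𝓞 K)) : ‖Ψ 𝔭.1‖ ≤ 1 := by simpa using hψ 1 𝔭
  have hψ₂ (𝔭 : NonzeroPrimeIdeal (𝓞 K)) : ‖Ψ 𝔭.1 * (1 + Ψ 𝔭.1)‖ ≤ 2 := by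
    rw [norm_mul, ← one_mul 2]
    exact mul_le_mul (hψ₁ 𝔭) ((norm_add_le _ _).trans (by rw [norm_one]; linarith [hψ₁ 𝔭]))
      (norm_nonneg _) zero_le_one
  have hs₁ : (-s).re < -1 := by simpa using hs
  have hlhs := tsum_squarefree_eq_tprod Ψ (summable_norm_mul_absNorm_cpow hψ₂ hs₁)
  refine ⟨hlhs, ?_, fun s' hs' ↦ ?_⟩
  · have hs₀ : (-s).re < 0 := by linarith
    rw [hlhs, tprod_one_add_eq_tprod_inv_mul_tprod_inv_mul
      (summable_norm_mul_absNorm_cpow hψ₁ hs₁) (summable_norm_mul_absNorm_cpow (hψ 2) hs₁)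
      (summable_norm_mul_absNorm_cpow hψ₂ hs₁)
      (fun 𝔭 ↦ one_sub_mul_absNorm_cpow_ne_zero 𝔭 (hψ₁ 𝔭) hs₀)
      (fun 𝔭 ↦ one_sub_mul_absNorm_cpow_ne_zero 𝔭 (hψ 2 𝔭) hs₀)]
    congr 1
    refine tprod_congr fun 𝔭 ↦ ?_
    rw [one_sub_mul_mul_one_sub_sq_mul_mul_one_add_mul, ← Complex.cpow_nat_mul,
      ← Complex.cpow_nat_mul]
    push_cast
    ring_nf
  · exact multipliable_one_sub_mul_absNorm_cpow_add_mul (C₂ := 3) (C₃ := 2)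
      (fun 𝔭 ↦ (norm_add₃_le ..).trans (by linarith [hψ 2 𝔭, hψ 3 𝔭, hψ 4 𝔭]))
      (fun 𝔭 ↦ (norm_add_le _ _).trans (by linarith [hψ 4 𝔭, hψ 5 𝔭]))
      (by simp; linarith) (by simp; linarith)
end
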